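/- Let F be a correspondence from X to Y with Gr(f) ⊆ F for a continuous map f: X → Y. If F is homologically consistent (q_*(ker p_*) = 0), then F is homologically complete (p_* surjective), F_* = q_* ∘ p_*^{-1} is well-defined, and F_* = f_*. -/

import Mathlib

open CategoryTheory

/-- Singular homology in degree `k`, with coefficients in the field `K`: the composite of the
singular simplicial set functor, the free `K`-module functor, the alternating face map
complex, and homology of chain complexes. -/
noncomputable def SingH (K : Type) [Field K] (k : ℕ) : TopCat.{0} ⥤ ModuleCat.{0} K :=
  TopCat.toSSet ⋙ ((SimplicialObject.whiskering _ _).obj (ModuleCat.free K)) ⋙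
    AlgebraicTopology.alternatingFaceMapComplex _ ⋙
    HomologicalComplex.homologyFunctor _ _ k

variable (X Y : Type) [TopologicalSpace X] [TopologicalSpace Y]

/-- The first projection of a correspondence `F ⊆ X × Y`, as a map of spaces. -/
def projX (F : Set (X × Y)) : TopCat.of F ⟶ TopCat.of X :=
  TopCat.ofHom ⟨fun z => z.1.1, continuous_fst.comp continuous_subtype_val⟩

/-- The second projection of a correspondence `F ⊆ X × Y`, as a map of spaces. -/
def projY (F : Set (X × Y)) : TopCat.of F ⟶ TopCat.of Y :=
  TopCat.ofHom ⟨fun z => z.1.2, continuous_snd.comp continuous_subtype_val⟩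

/-!
The graph of `f` gives a section `g : X → F` of `p` with `q ∘ g = f`. Hence `p₋` has the
section `g₋`, so it is surjective, and every `u` splits as `g₋ p₋ u + (u - g₋ p₋ u)` with the
second summand in `ker p₋ ⊆ ker q₋`. Therefore `q₋ u = q₋ g₋ p₋ u = f₋ p₋ u`.
-/

namespace ModuleCat

variable {R : Type*} [Ring R] {M N P : ModuleCat R}

theorem surjective_of_comp_eq_id {p : M ⟶ N} {s : N ⟶ M} (hs : s ≫ p = 𝟙 N) :
    Function.Surjective p := fun v => ⟨s v, by simpa using ConcreteCategory.congr_hom hs v⟩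

theorem eq_comp_comp_of_comp_eq_id_of_ker_le {p : M ⟶ N} {s : N ⟶ M} (hs : s ≫ p = 𝟙 N)
    {q : M ⟶ P} (hker : ∀ u, p u = 0 → q u = 0) : q = p ≫ s ≫ q := by
  ext u
  have hps : p (s (p u)) = p u := by simpa using ConcreteCategory.congr_hom hs (p u)
  have hq := hker (u - s (p u)) (by rw [map_sub, hps, sub_self])
  rw [map_sub, sub_eq_zero] at hq
  simpa using hq

end ModuleCat

section Graph

variable {X Y} (f : X → Y) (hf : Continuous f) (F : Set (X × Y)) (hgraph : ∀ x, (x, f x) ∈ F)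

def graphMap : TopCat.of X ⟶ TopCat.of F :=
  TopCat.ofHom ⟨fun x => ⟨(x, f x), hgraph x⟩, (continuous_id.prodMk hf).subtype_mk _⟩

theorem graphMap_comp_projX : graphMap f hf F hgraph ≫ projX X Y F = 𝟙 _ :=
  rfl

theorem graphMap_comp_projY : graphMap f hf F hgraph ≫ projY X Y F = TopCat.ofHom ⟨f, hf⟩ :=
  rfl

end Graph

theorem correspondence_containing_graph
    (K : Type) [Field K] (k : ℕ) (f : X → Y) (hf : Continuous f)
    (F : Set (X × Y)) (hgraph : ∀ x : X, (x, f x) ∈ F)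
    (hconsistent : ∀ u, (SingH K k).map (projX X Y F) u = 0 →
      (SingH K k).map (projY X Y F) u = 0) :
    Function.Surjective ((SingH K k).map (projX X Y F)) ∧
    (SingH K k).map (projY X Y F) =
      (SingH K k).map (projX X Y F) ≫
        (SingH K k).map (TopCat.ofHom ⟨f, hf⟩ : TopCat.of X ⟶ TopCat.of Y) := by
  have hsection : (SingH K k).map (graphMap f hf F hgraph) ≫ (SingH K k).map (projX X Y F) =
      𝟙 _ := by
    rw [← Functor.map_comp, graphMap_comp_projX, CategoryTheory.Functor.map_id]
  refine ⟨ModuleCat.surjective_of_comp_eq_id hsection, ?_⟩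
  rw [ModuleCat.eq_comp_comp_of_comp_eq_id_of_ker_le hsection hconsistent, ← Functor.map_comp,
    graphMap_comp_projY]
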